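/- arXiv:2502.09161 — 3 statements merged into one kernel-verified Lean document; each statement's English description precedes it below -/
import Mathlib

section
/- For any finite multiset M of positive integers, the identity Σ_{T∈𝒯_M} x_1^{oleaf(T)} x_2^{yleaf(T)} y_1^{oint(T)} y_2^{yint(T)} = Σ_{T∈𝒜_M} (x_1 y_1)^{oleaf(T)} (x_2 + y_2)^{yleaf(T)} holds in the polynomial ring ℤ[x_1, x_2, y_1, y_2], where 𝒜_M = {T ∈ 𝒯_M : yint(T) = 0}. -/
/-- Labeled plane trees: a node with a label in `ℕ` and a (left-to-right ordered)
list of children. -/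
inductive LTree : Type where
  | node : ℕ → List LTree → LTree

namespace LTree

/-- The label of the root. -/
def label : LTree → ℕ
  | node a _ => a

/-- The list of children of the root, from left to right. -/
def children : LTree → List LTree
  | node _ cs => cs

/-- A tree consisting of a single node is a leaf. -/
def isLeaf (t : LTree) : Bool := t.children.isEmpty

/-- The list of all subtrees (i.e. all nodes) of a tree. -/
def subtrees : LTree → List LTree
  | node a cs => node a cs :: (cs.attach.map (fun c => subtrees c.1)).flatten
decreasing_by
  simp only [LTree.node.sizeOf_spec]
  have := List.sizeOf_lt_of_mem c.2
  omega

/-- The multiset of labels of all nodes of a tree. -/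
def labels (T : LTree) : Multiset ℕ := (T.subtrees.map label : List ℕ)

/-- `T` is a weakly increasing tree on the multiset `M`: the root is labeled `0`,
the multiset of labels is `M ∪ {0}`, labels weakly increase along root-to-leaf paths,
and the labels of the children of each node weakly increase from right to left. -/
def IsWIT (M : Multiset ℕ) (T : LTree) : Prop :=
  T.label = 0 ∧ T.labels = 0 ::ₘ M ∧
  ∀ t ∈ T.subtrees, (∀ c ∈ t.children, t.label ≤ c.label) ∧
    List.Chain' (fun a b => b ≤ a) (t.children.map label)

/-- `T` is (an encoding of) a plane tree with `n` edges: all labels are zero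
and there are `n + 1` nodes. -/
def IsPlane (n : ℕ) (T : LTree) : Prop :=
  (∀ t ∈ T.subtrees, t.label = 0) ∧ T.subtrees.length = n + 1

/-- The number of singleton leaves: leaves that are the only child of their parent. -/
def sleaf (T : LTree) : ℕ :=
  T.subtrees.countP (fun t => match t.children with
    | [c] => c.isLeaf
    | _ => false)

/-- The number of elder leaves: leaves that are the leftmost child of their parent
and have siblings. -/
def eleaf (T : LTree) : ℕ :=
  T.subtrees.countP (fun t => match t.children with
    | c :: _ :: _ => c.isLeaf
    | _ => false)

/-- The number of young leaves: leaves that are not the leftmost child of their parent. -/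
def yleaf (T : LTree) : ℕ :=
  (T.subtrees.map (fun t => t.children.tail.countP isLeaf)).sum

/-- The number of young internal nodes: internal nodes whose leftmost child is internal. -/
def yint (T : LTree) : ℕ :=
  T.subtrees.countP (fun t => match t.children with
    | c :: _ => !c.isLeaf
    | _ => false)

/-- The number of singleton internal nodes: parents of a singleton leaf. -/
def sint (T : LTree) : ℕ :=
  T.subtrees.countP (fun t => match t.children with
    | [c] => c.isLeaf
    | _ => false)

/-- The number of elder internal nodes: parents of an elder leaf. -/
def eint (T : LTree) : ℕ :=
  T.subtrees.countP (fun t => match t.children with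
    | c :: _ :: _ => c.isLeaf
    | _ => false)

/-- The number of old leaves: leaves that are the leftmost child of their parent. -/
def oleaf (T : LTree) : ℕ := sleaf T + eleaf T

/-- The number of old internal nodes. -/
def oint (T : LTree) : ℕ := sint T + eint T

end LTree

/-!
Collapse, from the leaves up, every node `t` whose leftmost child `c` is internal: the children of
`c` move up to the front of the children of `t`, and `c` stays behind them as a leaf. This maps
`𝒯_M` onto `𝒜_M` and preserves the labels, the order conditions and the number of old leaves
(which equals the number of old internal nodes). Conversely, the trees collapsing to `A ∈ 𝒜_M`
are obtained by marking any set of young leaves of `A`, a marked leaf becoming an internal node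
that adopts all its left siblings; each marking trades a young leaf for a young internal node, so
the fibre over `A` contributes `(x₁y₁)^oleaf(A) (x₂ + y₂)^yleaf(A)`.
-/

theorem List.isChain_ge_append_cons_iff {α : Type*} [Preorder α] {l r : List α} {b : α} :
    (l ++ b :: r).IsChain (fun x y => y ≤ x) ↔
      l.IsChain (fun x y => y ≤ x) ∧ (∀ x ∈ l, b ≤ x) ∧ (b :: r).IsChain (fun x y => y ≤ x) := by
  simp only [List.isChain_iff_pairwise, List.pairwise_append, List.pairwise_cons,
    List.mem_cons, forall_eq_or_imp]
  exact ⟨fun ⟨hl, hr, hlr⟩ => ⟨hl, fun x hx => (hlr x hx).1, hr⟩,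
    fun ⟨hl, hlb, hb, hr⟩ => ⟨hl, ⟨hb, hr⟩, fun x hx =>
      ⟨hlb x hx, fun y hy => (hb y hy).trans (hlb x hx)⟩⟩⟩

theorem List.prod_map_pow_eq_pow_sum {ι M : Type*} [Monoid M] (l : List ι) (f : ι → ℕ) (a : M) :
    (l.map fun i => a ^ f i).prod = a ^ (l.map f).sum := by
  induction l with
  | nil => simp
  | cons i l ih => simp [ih, pow_add]

theorem List.map_eq_of_mem_sections_map {α β : Type*} {f : α → β} {g : β → List α} {l : List β}
    {s : List α} (hs : s ∈ (l.map g).sections) (h : ∀ b ∈ l, ∀ a ∈ g b, f a = b) :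
    s.map f = l := by
  rw [List.mem_sections, List.forall₂_map_right_iff] at hs
  induction hs with
  | nil => rfl
  | cons hab _ ih =>
    rw [List.map_cons, h _ List.mem_cons_self _ hab,
      ih fun b hb => h b (List.mem_cons_of_mem _ hb)]

theorem List.nodup_sections {α : Type*} {L : List (List α)} (h : ∀ l ∈ L, l.Nodup) :
    L.sections.Nodup := by
  induction L with
  | nil => simp [List.sections]
  | cons l L ih =>
    rw [List.forall_mem_cons] at h
    rw [List.sections, List.nodup_flatMap]
    refine ⟨fun s _ => h.1.map fun _ _ hab => List.head_eq_of_cons_eq hab, ?_⟩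
    refine (ih h.2).imp fun hne x hx hx' => hne ?_
    obtain ⟨a, -, rfl⟩ := List.mem_map.1 hx
    obtain ⟨a', -, heq⟩ := List.mem_map.1 hx'
    exact (List.tail_eq_of_cons_eq heq).symm

theorem List.sum_map_prod_sections {α R : Type*} [CommSemiring R] (f : α → R)
    (L : List (List α)) :
    (L.sections.map fun s => (s.map f).prod).sum = (L.map fun l => (l.map f).sum).prod := by
  induction L with
  | nil => simp [List.sections]
  | cons l L ih =>
    simp only [List.sections, List.flatMap_def, List.map_flatten, List.sum_flatten, List.map_map,
      Function.comp_def, List.map_cons, List.prod_cons, List.sum_map_mul_right,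
      List.sum_map_mul_left, ih]

namespace LTree

@[elab_as_elim, induction_eliminator]
theorem ind {motive : LTree → Prop}
    (node : ∀ a cs, (∀ c ∈ cs, motive c) → motive (LTree.node a cs)) : ∀ t, motive t
  | .node a cs => node a cs fun c _ => ind node c

@[simp] theorem label_node (a : ℕ) (cs : List LTree) : (node a cs).label = a := rfl

@[simp] theorem children_node (a : ℕ) (cs : List LTree) : (node a cs).children = cs := rfl

@[simp] theorem isLeaf_node_nil (a : ℕ) : (node a []).isLeaf = true := rfl

@[simp] theorem isLeaf_node_cons (a : ℕ) (c : LTree) (cs : List LTree) :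
    (node a (c :: cs)).isLeaf = false := rfl

theorem eq_node_nil_of_isLeaf {t : LTree} (h : t.isLeaf = true) : t = node t.label [] := by
  cases t with
  | node a cs => cases cs with
    | nil => rfl
    | cons c cs => simp at h

theorem subtrees_node (a : ℕ) (cs : List LTree) :
    (node a cs).subtrees = node a cs :: (cs.map subtrees).flatten := by
  rw [subtrees]
  simp

theorem countP_subtrees_node (p : LTree → Bool) (a : ℕ) (cs : List LTree) :
    (node a cs).subtrees.countP p
      = (p (node a cs)).toNat + (cs.map fun c => c.subtrees.countP p).sum := by
  rw [subtrees_node, List.countP_cons, List.countP_flatten, List.map_map, add_comm]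
  cases p (node a cs) <;> rfl

theorem labels_node (a : ℕ) (cs : List LTree) :
    labels (node a cs) = a ::ₘ (cs.map labels).sum := by
  simp only [labels, subtrees_node, List.map_cons, List.map_flatten, List.map_map,
    ← Multiset.cons_coe, label_node]
  congr 1
  induction cs with
  | nil => rfl
  | cons c cs ih => rw [List.map_cons, List.flatten_cons, ← Multiset.coe_add, ih]; rfl

def firstLeaf : List LTree → Bool
  | c :: _ => c.isLeaf
  | [] => false

def firstInternal : List LTree → Bool
  | c :: _ => !c.isLeaf
  | [] => false

@[simp] theorem firstLeaf_nil : firstLeaf [] = false := rfl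
@[simp] theorem firstLeaf_cons (c : LTree) (cs : List LTree) : firstLeaf (c :: cs) = c.isLeaf := rfl
@[simp] theorem firstInternal_nil : firstInternal [] = false := rfl
@[simp] theorem firstInternal_cons (c : LTree) (cs : List LTree) :
    firstInternal (c :: cs) = !c.isLeaf := rfl

theorem firstInternal_append {l : List LTree} (hl : l ≠ []) (l' : List LTree) :
    firstInternal (l ++ l') = firstInternal l := by
  cases l with
  | nil => contradiction
  | cons c l => rfl

theorem yleaf_node (a : ℕ) (cs : List LTree) :
    yleaf (node a cs) = cs.tail.countP isLeaf + (cs.map yleaf).sum := by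
  simp only [yleaf, subtrees_node, List.map_cons, List.sum_cons, List.map_flatten,
    List.sum_flatten, List.map_map, children_node]
  rfl

theorem yint_node (a : ℕ) (cs : List LTree) :
    yint (node a cs) = (firstInternal cs).toNat + (cs.map yint).sum := by
  rw [yint, countP_subtrees_node]
  rcases cs with _ | ⟨c, cs⟩ <;> rfl

@[simp] theorem yint_node_nil (a : ℕ) : yint (node a []) = 0 := by
  simp [yint_node]

theorem oleaf_node (a : ℕ) (cs : List LTree) :
    oleaf (node a cs) = (firstLeaf cs).toNat + (cs.map oleaf).sum := by
  have hs : sleaf (node a cs)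
      = (match cs with | [c] => c.isLeaf | _ => false).toNat + (cs.map sleaf).sum :=
    countP_subtrees_node _ a cs
  have he : eleaf (node a cs)
      = (match cs with | c :: _ :: _ => c.isLeaf | _ => false).toNat + (cs.map eleaf).sum :=
    countP_subtrees_node _ a cs
  rw [oleaf, hs, he, show cs.map oleaf = cs.map fun c => sleaf c + eleaf c from rfl,
    List.sum_map_add]
  rcases cs with _ | ⟨c, _ | ⟨c', cs⟩⟩
  · rfl
  · simp; omega
  · simp; omega

theorem oint_eq_oleaf (T : LTree) : oint T = oleaf T := rfl

theorem yint_node_eq_zero_iff {a : ℕ} {cs : List LTree} :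
    yint (node a cs) = 0 ↔ firstInternal cs = false ∧ ∀ c ∈ cs, yint c = 0 := by
  simp [yint_node, List.sum_eq_zero_iff]

def Increasing (T : LTree) : Prop :=
  ∀ t ∈ T.subtrees, (∀ c ∈ t.children, t.label ≤ c.label) ∧
    (t.children.map label).IsChain (fun a b => b ≤ a)

theorem isWIT_iff {M : Multiset ℕ} {T : LTree} :
    IsWIT M T ↔ T.label = 0 ∧ T.labels = 0 ::ₘ M ∧ Increasing T := Iff.rfl

theorem increasing_node_iff {a : ℕ} {cs : List LTree} :
    Increasing (node a cs) ↔ (∀ c ∈ cs, a ≤ c.label) ∧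
      (cs.map label).IsChain (fun x y => y ≤ x) ∧ ∀ c ∈ cs, Increasing c := by
  simp only [Increasing, subtrees_node, List.forall_mem_cons, List.forall_mem_flatten,
    List.forall_mem_map, children_node, label_node, and_assoc]

def collapseStep : List LTree → List LTree
  | node b (d :: ds) :: rest => (d :: ds) ++ node b [] :: rest
  | l => l

@[simp] theorem collapseStep_nil : collapseStep [] = [] := rfl

@[simp] theorem collapseStep_leaf_cons (b : ℕ) (rest : List LTree) :
    collapseStep (node b [] :: rest) = node b [] :: rest := rfl

@[simp] theorem collapseStep_node_cons (b : ℕ) (d : LTree) (ds rest : List LTree) :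
    collapseStep (node b (d :: ds) :: rest) = (d :: ds) ++ node b [] :: rest := rfl

theorem isLeaf_node_collapseStep (a : ℕ) (l : List LTree) :
    (node a (collapseStep l)).isLeaf = (node a l).isLeaf := by
  rcases l with _ | ⟨⟨b, _ | ⟨d, ds⟩⟩, rest⟩ <;> rfl

theorem labels_node_collapseStep (a : ℕ) (l : List LTree) :
    labels (node a (collapseStep l)) = labels (node a l) := by
  rcases l with _ | ⟨⟨b, _ | ⟨d, ds⟩⟩, rest⟩
  · rfl
  · rfl
  · simp [labels_node, Multiset.add_cons, add_assoc]

theorem oleaf_node_collapseStep (a : ℕ) (l : List LTree) :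
    oleaf (node a (collapseStep l)) = oleaf (node a l) := by
  rcases l with _ | ⟨⟨b, _ | ⟨d, ds⟩⟩, rest⟩
  · rfl
  · rfl
  · simp [oleaf_node]
    omega

theorem increasing_node_collapseStep_iff (a : ℕ) (l : List LTree) :
    Increasing (node a (collapseStep l)) ↔ Increasing (node a l) := by
  rcases l with _ | ⟨⟨b, _ | ⟨d, ds⟩⟩, rest⟩
  · rfl
  · rfl
  · rw [collapseStep_node_cons]
    generalize d :: ds = L
    simp only [increasing_node_iff, List.map_append, List.map_cons,
      List.isChain_ge_append_cons_iff, List.forall_mem_append, List.forall_mem_cons,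
      List.forall_mem_map, label_node, List.not_mem_nil, IsEmpty.forall_iff, implies_true,
      List.map_nil, List.isChain_nil, and_true, true_and]
    constructor
    · rintro ⟨⟨-, hab, hrest⟩, ⟨hL, hbL, hbr⟩, hincL, hincr⟩
      exact ⟨⟨hab, hrest⟩, hbr, ⟨hbL, hL, hincL⟩, hincr⟩
    · rintro ⟨⟨hab, hrest⟩, hbr, ⟨hbL, hL, hincL⟩, hincr⟩
      exact ⟨⟨fun x hx => hab.trans (hbL x hx), hab, hrest⟩, ⟨hL, hbL, hbr⟩, hincL, hincr⟩

theorem yint_node_collapseStep {a : ℕ} {l : List LTree} (h : ∀ c ∈ l, yint c = 0) :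
    yint (node a (collapseStep l)) = 0 := by
  rcases l with _ | ⟨⟨b, _ | ⟨d, ds⟩⟩, rest⟩
  · simp [yint_node]
  · simpa [yint_node_eq_zero_iff] using h
  · simp only [List.forall_mem_cons, yint_node_eq_zero_iff] at h
    rw [collapseStep_node_cons, yint_node_eq_zero_iff]
    simp_all [or_imp]

theorem collapseStep_append {l : List LTree} (hl : l ≠ []) (l' : List LTree) :
    collapseStep (l ++ l') = collapseStep l ++ l' := by
  rcases l with _ | ⟨⟨b, _ | ⟨d, ds⟩⟩, rest⟩
  · contradiction
  · rfl
  · simp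

theorem collapseStep_of_firstInternal_eq_false {l : List LTree} (h : firstInternal l = false) :
    collapseStep l = l := by
  rcases l with _ | ⟨⟨b, _ | ⟨d, ds⟩⟩, rest⟩ <;> simp_all

def collapse : LTree → LTree
  | node a cs => node a (collapseStep (cs.map collapse))

theorem collapse_node (a : ℕ) (cs : List LTree) :
    collapse (node a cs) = node a (collapseStep (cs.map collapse)) := by
  rw [collapse]

@[simp] theorem label_collapse (t : LTree) : (collapse t).label = t.label := by
  cases t
  rw [collapse_node]
  rfl

@[simp] theorem isLeaf_collapse (t : LTree) : (collapse t).isLeaf = t.isLeaf := by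
  cases t with
  | node a cs =>
    rw [collapse_node, isLeaf_node_collapseStep]
    cases cs <;> rfl

theorem map_label_map_collapse (l : List LTree) : (l.map collapse).map label = l.map label := by
  simp [Function.comp_def]

theorem firstLeaf_map_collapse (l : List LTree) : firstLeaf (l.map collapse) = firstLeaf l := by
  cases l <;> simp

theorem firstInternal_map_collapse (l : List LTree) :
    firstInternal (l.map collapse) = firstInternal l := by
  cases l <;> simp

theorem countP_isLeaf_map_collapse (l : List LTree) :
    (l.map collapse).countP isLeaf = l.countP isLeaf := by
  simp [List.countP_map, Function.comp_def]

theorem labels_collapse (t : LTree) : labels (collapse t) = labels t := by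
  induction t with
  | node a cs ih =>
    rw [collapse_node, labels_node_collapseStep, labels_node, labels_node, List.map_map]
    congr 2
    exact List.map_congr_left ih

theorem oleaf_collapse (t : LTree) : oleaf (collapse t) = oleaf t := by
  induction t with
  | node a cs ih =>
    rw [collapse_node, oleaf_node_collapseStep, oleaf_node, oleaf_node, firstLeaf_map_collapse,
      List.map_map]
    congr 2
    exact List.map_congr_left ih

theorem yint_collapse (t : LTree) : yint (collapse t) = 0 := by
  induction t with
  | node a cs ih =>
    rw [collapse_node]
    exact yint_node_collapseStep (by simpa using ih)

theorem increasing_collapse_iff (t : LTree) : Increasing (collapse t) ↔ Increasing t := by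
  induction t with
  | node a cs ih =>
    rw [collapse_node, increasing_node_collapseStep_iff, increasing_node_iff, increasing_node_iff,
      map_label_map_collapse]
    simp only [List.forall_mem_map, label_collapse]
    exact and_congr_right' (and_congr_right' (forall₂_congr fun c hc => ih c hc))

theorem isWIT_collapse_iff {M : Multiset ℕ} {T : LTree} : IsWIT M (collapse T) ↔ IsWIT M T := by
  rw [isWIT_iff, isWIT_iff, label_collapse, labels_collapse, increasing_collapse_iff]

theorem collapse_of_isLeaf {t : LTree} (h : t.isLeaf = true) : collapse t = t := by
  rw [eq_node_nil_of_isLeaf h, collapse_node]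
  rfl

def unmark : List LTree → List LTree
  | [] => []
  | node m [] :: rest => node m [] :: rest
  | node m (b₀ :: b) :: rest => unmark (b₀ :: b) ++ node m [] :: rest

theorem unmark_of_firstInternal_eq_false {l : List LTree} (h : firstInternal l = false) :
    unmark l = l := by
  rcases l with _ | ⟨⟨b, _ | ⟨d, ds⟩⟩, rest⟩
  · rw [unmark]
  · rw [unmark]
  · simp at h

theorem unmark_append {l : List LTree} (hl : l ≠ []) (l' : List LTree) :
    unmark (l ++ l') = unmark l ++ l' := by
  rcases l with _ | ⟨⟨b, _ | ⟨d, ds⟩⟩, rest⟩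
  · contradiction
  · simp [unmark]
  · simp [unmark]

/-- `markingsRev κ.reverse` lists the children lists that collapse to `κ`: scanning from the
right, a young leaf `e` is either kept or marked, i.e. replaced by a node labelled like `e` whose
children are a marking of everything to the left of `e`. -/
def markingsRev : List LTree → List (List LTree)
  | [] => [[]]
  | e :: r => (markingsRev r).map (· ++ [e]) ++
      if e.isLeaf && !r.isEmpty then (markingsRev r).map fun b => [node e.label b] else []

def markings (κ : List LTree) : List (List LTree) := markingsRev κ.reverse

@[simp] theorem markings_nil : markings [] = [[]] := rfl

theorem markings_concat (κ : List LTree) (e : LTree) :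
    markings (κ ++ [e]) = (markings κ).map (· ++ [e]) ++
      if e.isLeaf && !κ.isEmpty then (markings κ).map fun b => [node e.label b] else [] := by
  simp [markings, markingsRev]

theorem mem_markings_concat {κ : List LTree} {e : LTree} {x : List LTree} :
    x ∈ markings (κ ++ [e]) ↔ (∃ x' ∈ markings κ, x' ++ [e] = x) ∨
      e.isLeaf = true ∧ κ ≠ [] ∧ ∃ b ∈ markings κ, [node e.label b] = x := by
  rw [markings_concat]
  by_cases he : e.isLeaf = true <;> by_cases hκ : κ = [] <;> simp [he, hκ, eq_comm (a := x)]

theorem ne_nil_of_mem_markings {κ x : List LTree} (hx : x ∈ markings κ) (hκ : κ ≠ []) :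
    x ≠ [] := by
  induction κ using List.reverseRecOn with
  | nil => contradiction
  | append_singleton κ e ih =>
    rcases mem_markings_concat.1 hx with ⟨x', -, rfl⟩ | ⟨-, -, b, -, rfl⟩ <;> simp

theorem self_mem_markings (κ : List LTree) : κ ∈ markings κ := by
  induction κ using List.reverseRecOn with
  | nil => simp
  | append_singleton κ e ih => exact mem_markings_concat.2 (.inl ⟨κ, ih, rfl⟩)

theorem node_cons_mem_markings_append {κ b : List LTree} (hb : b ∈ markings κ) (hκ : κ ≠ [])
    (m : ℕ) (r : List LTree) : node m b :: r ∈ markings (κ ++ node m [] :: r) := by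
  induction r using List.reverseRecOn with
  | nil => exact mem_markings_concat.2 (.inr ⟨rfl, hκ, b, hb, rfl⟩)
  | append_singleton r e ih =>
    rw [← List.cons_append, ← List.cons_append, ← List.append_assoc]
    exact mem_markings_concat.2 (.inl ⟨_, ih, rfl⟩)

theorem collapseStep_map_collapse_of_mem_markings {κ x : List LTree}
    (hκ : firstInternal κ = false) (hx : x ∈ markings κ) :
    collapseStep (x.map collapse) = κ.map collapse := by
  induction κ using List.reverseRecOn generalizing x with
  | nil => simp_all
  | append_singleton κ e ih =>
    rcases mem_markings_concat.1 hx with ⟨x', hx', rfl⟩ | ⟨he, hκne, b, hb, rfl⟩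
    · rcases eq_or_ne κ [] with rfl | hκne
      · obtain rfl : x' = [] := by simpa using hx'
        exact collapseStep_of_firstInternal_eq_false (by simpa using hκ)
      · rw [firstInternal_append hκne] at hκ
        rw [List.map_append, List.map_append,
          collapseStep_append (by simpa using ne_nil_of_mem_markings hx' hκne), ih hκ hx']
    · rw [firstInternal_append hκne] at hκ
      obtain ⟨c, cs, hcs⟩ := List.exists_cons_of_ne_nil (by simpa using hκne : κ.map collapse ≠ [])
      rw [List.map_singleton, collapse_node, ih hκ hb, hcs, collapseStep_node_cons, ← hcs,
        List.map_append, List.map_singleton, collapse_of_isLeaf he, ← eq_node_nil_of_isLeaf he]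

theorem unmark_of_mem_markings {κ x : List LTree} (hκ : firstInternal κ = false)
    (hx : x ∈ markings κ) : unmark x = κ := by
  induction κ using List.reverseRecOn generalizing x with
  | nil => simp_all [unmark]
  | append_singleton κ e ih =>
    rcases mem_markings_concat.1 hx with ⟨x', hx', rfl⟩ | ⟨he, hκne, b, hb, rfl⟩
    · rcases eq_or_ne κ [] with rfl | hκne
      · obtain rfl : x' = [] := by simpa using hx'
        exact unmark_of_firstInternal_eq_false hκ
      · rw [firstInternal_append hκne] at hκ
        rw [unmark_append (ne_nil_of_mem_markings hx' hκne), ih hκ hx']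
    · rw [firstInternal_append hκne] at hκ
      obtain ⟨b₀, b, rfl⟩ := List.exists_cons_of_ne_nil (ne_nil_of_mem_markings hb hκne)
      rw [unmark, ih hκ hb, ← eq_node_nil_of_isLeaf he]

theorem nodup_markings (κ : List LTree) : (markings κ).Nodup := by
  induction κ using List.reverseRecOn with
  | nil => simp
  | append_singleton κ e ih =>
    rw [markings_concat, List.nodup_append]
    refine ⟨ih.map fun _ _ => List.append_cancel_right, ?_, ?_⟩
    · split
      · exact ih.map fun _ _ h => by simpa using h
      · exact List.nodup_nil
    · split
      · next h =>
        simp only [Bool.and_eq_true, Bool.not_eq_true', List.isEmpty_eq_false_iff] at h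
        simp only [List.mem_map]
        rintro _ ⟨x', hx', rfl⟩ _ ⟨b, -, hb⟩ heq
        have := congrArg List.length (heq.trans hb.symm)
        simp [ne_nil_of_mem_markings hx' h.2] at this
      · simp

/-- When `A` has no young internal node, these are exactly the trees that collapse to `A`. -/
def expansions : LTree → List LTree
  | node a cs => ((cs.map expansions).sections.flatMap markings).map (node a)

theorem expansions_node (a : ℕ) (cs : List LTree) :
    expansions (node a cs) = ((cs.map expansions).sections.flatMap markings).map (node a) := by
  rw [expansions]

theorem mem_expansions_node {a : ℕ} {ds : List LTree} {T : LTree} :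
    T ∈ expansions (node a ds) ↔
      ∃ κ ∈ (ds.map expansions).sections, ∃ x ∈ markings κ, node a x = T := by
  simp only [expansions_node, List.mem_map, List.mem_flatMap]
  constructor
  · rintro ⟨x, ⟨κ, hκ, hx⟩, rfl⟩
    exact ⟨κ, hκ, x, hx, rfl⟩
  · rintro ⟨κ, hκ, x, hx, rfl⟩
    exact ⟨x, ⟨κ, hκ, hx⟩, rfl⟩

theorem expansions_node_nil (a : ℕ) : expansions (node a []) = [node a []] := by
  simp [expansions_node, List.sections]

theorem collapse_of_mem_expansions {A T : LTree} (hA : yint A = 0) (hT : T ∈ expansions A) :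
    collapse T = A := by
  induction A generalizing T with
  | node a ds ih =>
    obtain ⟨hfirst, hds⟩ := yint_node_eq_zero_iff.1 hA
    obtain ⟨κ, hκ, x, hx, rfl⟩ := mem_expansions_node.1 hT
    have hκds : κ.map collapse = ds :=
      List.map_eq_of_mem_sections_map hκ fun d hd _ ht => ih d hd (hds d hd) ht
    have hκfirst : firstInternal κ = false := by
      rw [← firstInternal_map_collapse, hκds, hfirst]
    rw [collapse_node, collapseStep_map_collapse_of_mem_markings hκfirst hx, hκds]

theorem mem_expansions_collapse (T : LTree) : T ∈ expansions (collapse T) := by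
  induction T with
  | node a cs ih =>
    have hsub : ∀ l ⊆ cs, List.Forall₂ (· ∈ ·) l ((l.map collapse).map expansions) :=
      fun l hl => by simpa [List.forall₂_same] using fun c hc => ih c (hl hc)
    rw [collapse_node, mem_expansions_node]
    rcases cs with _ | ⟨c₀, cr⟩
    · exact ⟨[], by simp [List.sections], [], by simp, rfl⟩
    rcases hc₀ : collapse c₀ with ⟨b, _ | ⟨d, ds⟩⟩
    · rw [List.map_cons, hc₀, collapseStep_leaf_cons, ← hc₀, ← List.map_cons]
      exact ⟨_, List.mem_sections.2 (hsub _ (List.Subset.refl _)), _, self_mem_markings _, rfl⟩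
    · have h₀ := ih c₀ List.mem_cons_self
      rw [hc₀, mem_expansions_node] at h₀
      obtain ⟨κ₀, hκ₀, x₀, hx₀, rfl⟩ := h₀
      have hκ₀ne : κ₀ ≠ [] := by
        rintro rfl
        simpa using List.mem_sections_length hκ₀
      refine ⟨κ₀ ++ node b [] :: cr, ?_, _, node_cons_mem_markings_append hx₀ hκ₀ne b cr, rfl⟩
      rw [List.map_cons, hc₀, collapseStep_node_cons, List.mem_sections, List.map_append,
        List.map_cons]
      exact List.rel_append (List.mem_sections.1 hκ₀)
        (.cons (by simp [expansions_node_nil]) (hsub cr (List.subset_cons_self _ _)))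

theorem map_collapse_of_mem_sections {ds κ : List LTree} (hds : ∀ d ∈ ds, yint d = 0)
    (hκ : κ ∈ (ds.map expansions).sections) : κ.map collapse = ds :=
  List.map_eq_of_mem_sections_map hκ fun d hd _ ht => collapse_of_mem_expansions (hds d hd) ht

theorem nodup_expansions {A : LTree} (hA : yint A = 0) : (expansions A).Nodup := by
  induction A with
  | node a ds ih =>
    obtain ⟨hfirst, hds⟩ := yint_node_eq_zero_iff.1 hA
    have hκfirst : ∀ κ ∈ (ds.map expansions).sections, firstInternal κ = false := fun κ hκ => by
      rw [← firstInternal_map_collapse, map_collapse_of_mem_sections hds hκ, hfirst]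
    rw [expansions_node]
    refine (List.nodup_flatMap.2 ⟨fun κ _ => nodup_markings κ, ?_⟩).map fun _ _ h => by
      simpa using h
    refine (List.nodup_sections ?_).imp_of_mem fun hκ hκ' hne x hx hx' => hne ?_
    · simpa using fun d hd => ih d hd (hds d hd)
    · rw [← unmark_of_mem_markings (hκfirst _ hκ) hx, unmark_of_mem_markings (hκfirst _ hκ') hx']

theorem filter_collapse_eq_toFinset_expansions [DecidableEq LTree] {s : Finset LTree}
    (hs : ∀ T, collapse T ∈ s ↔ T ∈ s) {A : LTree} (hA : A ∈ s) (hA0 : yint A = 0) :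
    s.filter (fun T => collapse T = A) = (expansions A).toFinset := by
  ext T
  rw [Finset.mem_filter, List.mem_toFinset]
  constructor
  · rintro ⟨-, rfl⟩
    exact mem_expansions_collapse T
  · intro hT
    have hTA := collapse_of_mem_expansions hA0 hT
    exact ⟨(hs T).1 (hTA ▸ hA), hTA⟩

theorem oleaf_eq_of_mem_expansions {A T : LTree} (hA : yint A = 0) (hT : T ∈ expansions A) :
    oleaf T = oleaf A := by
  rw [← oleaf_collapse, collapse_of_mem_expansions hA hT]

section Weight

variable {R : Type*} [CommSemiring R] (u v : R)

def weight (T : LTree) : R := u ^ yleaf T * v ^ yint T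

theorem weight_node (a : ℕ) (cs : List LTree) :
    weight u v (node a cs) = u ^ cs.tail.countP isLeaf * v ^ (firstInternal cs).toNat *
      (cs.map (weight u v)).prod := by
  rw [show weight u v = fun T => u ^ yleaf T * v ^ yint T from rfl]
  simp only [yleaf_node, yint_node, pow_add, List.prod_map_mul, List.prod_map_pow_eq_pow_sum]
  ring

theorem weight_of_isLeaf {e : LTree} (he : e.isLeaf = true) : weight u v e = 1 := by
  rw [eq_node_nil_of_isLeaf he, weight_node]
  simp

theorem weight_node_concat (a : ℕ) {x : List LTree} (hx : x ≠ []) (e : LTree) :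
    weight u v (node a (x ++ [e])) = weight u v (node a x) * weight u v e * u ^ e.isLeaf.toNat := by
  simp only [weight_node, List.tail_append_of_ne_nil hx, List.countP_append, List.countP_singleton,
    firstInternal_append hx, List.map_append, List.prod_append, List.map_singleton,
    List.prod_singleton, pow_add]
  cases e.isLeaf <;> simp <;> ring

theorem weight_node_singleton (a m : ℕ) {b : List LTree} (hb : b ≠ []) :
    weight u v (node a [node m b]) = v * weight u v (node m b) := by
  obtain ⟨b₀, b, rfl⟩ := List.exists_cons_of_ne_nil hb
  rw [weight_node u v a]
  simp

theorem sum_weight_markings (a : ℕ) {κ : List LTree} (hκ : firstInternal κ = false) :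
    ((markings κ).map fun x => weight u v (node a x)).sum
      = (u + v) ^ κ.tail.countP isLeaf * (κ.map (weight u v)).prod := by
  induction κ using List.reverseRecOn generalizing a with
  | nil => simp [weight_node]
  | append_singleton κ e ih =>
    rcases eq_or_ne κ [] with rfl | hκne
    · have he : e.isLeaf = true := by simpa using hκ
      rw [markings_concat]
      simp [weight_node, he]
    rw [firstInternal_append hκne] at hκ
    have hkept : ((markings κ).map fun x => weight u v (node a (x ++ [e]))).sum
        = ((markings κ).map fun x => weight u v (node a x)).sum * weight u v e *
          u ^ e.isLeaf.toNat := by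
      rw [List.map_congr_left fun x hx =>
        weight_node_concat u v a (ne_nil_of_mem_markings hx hκne) e, List.sum_map_mul_right,
        List.sum_map_mul_right]
    rw [markings_concat, List.map_append, List.sum_append, List.map_map, Function.comp_def,
      hkept, ih a hκ, List.tail_append_of_ne_nil hκne, List.countP_append, List.map_append,
      List.prod_append, List.map_singleton, List.prod_singleton, pow_add]
    -- a young leaf `e` weighs `u` when kept and `v` when marked
    by_cases he : e.isLeaf = true
    · have hmarked : ((markings κ).map fun b => weight u v (node a [node e.label b])).sum
          = v * ((u + v) ^ κ.tail.countP isLeaf * (κ.map (weight u v)).prod) := by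
        rw [List.map_congr_left fun b hb =>
          weight_node_singleton u v a e.label (ne_nil_of_mem_markings hb hκne),
          List.sum_map_mul_left, ih e.label hκ]
      rw [if_pos (by simpa [he] using hκne), List.map_map, Function.comp_def, hmarked,
        weight_of_isLeaf u v he]
      simp [he]
      ring
    · simp [he, mul_assoc]

theorem sum_weight_expansions {A : LTree} (hA : yint A = 0) :
    ((expansions A).map (weight u v)).sum = (u + v) ^ yleaf A := by
  induction A with
  | node a ds ih =>
    obtain ⟨hfirst, hds⟩ := yint_node_eq_zero_iff.1 hA
    have hmarkings : ∀ κ ∈ (ds.map expansions).sections,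
        ((markings κ).map fun x => weight u v (node a x)).sum
          = (u + v) ^ ds.tail.countP isLeaf * (κ.map (weight u v)).prod := by
      intro κ hκ
      have hκds := map_collapse_of_mem_sections hds hκ
      rw [sum_weight_markings u v a (by rw [← firstInternal_map_collapse, hκds, hfirst]),
        ← hκds, ← List.map_tail, countP_isLeaf_map_collapse]
    calc ((expansions (node a ds)).map (weight u v)).sum
        = ((ds.map expansions).sections.map fun κ =>
            ((markings κ).map fun x => weight u v (node a x)).sum).sum := by
          simp only [expansions_node, List.map_map, List.flatMap_def, List.map_flatten,
            List.sum_flatten, Function.comp_def]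
      _ = (u + v) ^ ds.tail.countP isLeaf *
            (ds.map fun d => ((expansions d).map (weight u v)).sum).prod := by
          rw [List.map_congr_left hmarkings, List.sum_map_mul_left, List.sum_map_prod_sections,
            List.map_map, Function.comp_def]
      _ = (u + v) ^ yleaf (node a ds) := by
          rw [List.map_congr_left fun d hd => ih d hd (hds d hd), List.prod_map_pow_eq_pow_sum,
            yleaf_node, pow_add]

end Weight

end LTree

open MvPolynomial in
theorem wit_tip_augmented_identity_general
    (M : Multiset ℕ)
    (TM : Finset LTree) (hTM : ∀ T, T ∈ TM ↔ LTree.IsWIT M T) :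
    ∑ T ∈ TM,
        (X 0 : MvPolynomial (Fin 4) ℤ) ^ LTree.oleaf T * X 1 ^ LTree.yleaf T *
          X 2 ^ LTree.oint T * X 3 ^ LTree.yint T
      = ∑ T ∈ TM.filter (fun T => LTree.yint T = 0),
          (X 0 * X 2 : MvPolynomial (Fin 4) ℤ) ^ LTree.oleaf T *
            (X 1 + X 3) ^ LTree.yleaf T := by
  classical
  have hcollapse : ∀ T, LTree.collapse T ∈ TM ↔ T ∈ TM := fun T => by
    rw [hTM, hTM, LTree.isWIT_collapse_iff]
  have hmaps : ∀ T ∈ TM, LTree.collapse T ∈ TM.filter (fun T => LTree.yint T = 0) :=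
    fun T hT => Finset.mem_filter.2 ⟨(hcollapse T).2 hT, LTree.yint_collapse T⟩
  rw [← Finset.sum_fiberwise_of_maps_to hmaps]
  refine Finset.sum_congr rfl fun A hA => ?_
  obtain ⟨hA, hA0⟩ := Finset.mem_filter.1 hA
  have hweight : ∀ T ∈ LTree.expansions A,
      (X 0 : MvPolynomial (Fin 4) ℤ) ^ LTree.oleaf T * X 1 ^ LTree.yleaf T *
          X 2 ^ LTree.oint T * X 3 ^ LTree.yint T
        = (X 0 * X 2) ^ LTree.oleaf A * LTree.weight (X 1) (X 3) T := fun T hT => by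
    rw [LTree.oint_eq_oleaf, ← LTree.oleaf_eq_of_mem_expansions hA0 hT, LTree.weight, mul_pow]
    ring
  rw [LTree.filter_collapse_eq_toFinset_expansions hcollapse hA hA0,
    List.sum_toFinset _ (LTree.nodup_expansions hA0), List.map_congr_left hweight,
    List.sum_map_mul_left, LTree.sum_weight_expansions _ _ hA0]

open MvPolynomial in
/-- **Theorem (reduction to tip-augmented weakly increasing trees).**
For any multiset `M` of positive integers,
`Σ_{T ∈ 𝒯_M} x₁^{oleaf} x₂^{yleaf} y₁^{oint} y₂^{yint}
  = Σ_{T ∈ 𝒜_M} (x₁y₁)^{oleaf} (x₂ + y₂)^{yleaf}`,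
where `𝒜_M` is the set of trees in `𝒯_M` without young internal nodes.  Here
`x₁ = X 0`, `x₂ = X 1`, `y₁ = X 2`, `y₂ = X 3` in `ℤ[x₁,x₂,y₁,y₂]`. -/
theorem wit_tip_augmented_identity
    (M : Multiset ℕ) (hM : ∀ x ∈ M, 0 < x)
    (TM : Finset LTree) (hTM : ∀ T, T ∈ TM ↔ LTree.IsWIT M T) :
    ∑ T ∈ TM,
        (X 0 : MvPolynomial (Fin 4) ℤ) ^ LTree.oleaf T * X 1 ^ LTree.yleaf T *
          X 2 ^ LTree.oint T * X 3 ^ LTree.yint T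
      = ∑ T ∈ TM.filter (fun T => LTree.yint T = 0),
          (X 0 * X 2 : MvPolynomial (Fin 4) ℤ) ^ LTree.oleaf T *
            (X 1 + X 3) ^ LTree.yleaf T :=
  wit_tip_augmented_identity_general M TM hTM
end

section
/- Define N_1 = u_1 and, for n ≥ 2, N_n = Σ_{B∈ℬ_n} u_1^{sleaf(B)} u_2^{etleaf(B)} u_3^{entleaf(B)} v_1^{yerleaf(B)} v_2^{syleaf(B)} in ℤ[u_1,u_2,u_3,v_1,v_2]. Let N(t) = Σ_{n≥1} N_n t^n, a formal power series in t with coefficients in ℤ[u_1,u_2,u_3,v_1,v_2], and set a = u_1 − u_3 + v_1 − v_2, b = u_1 + u_3 − v_1 + v_2 and c = v_1 + 1. Then (a t² − c t + 1 − 2t·N(t))² = a² t⁴ + 2(bc − 2u_1 − 2u_2 v_2) t³ + (c² − 2b) t² − 2c t + 1 as formal power series in t. -/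
/-- (Unlabeled) binary trees: each node has a (possibly empty) left subtree and a
(possibly empty) right subtree. -/
inductive BTree : Type where
  | nil : BTree
  | node : BTree → BTree → BTree

namespace BTree

/-- The list of all subtrees rooted at actual nodes. -/
def subtrees : BTree → List BTree
  | nil => []
  | node l r => node l r :: (l.subtrees ++ r.subtrees)

/-- The number of nodes. -/
def numNodes (B : BTree) : ℕ := B.subtrees.length

/-- The left subtree. -/
def left : BTree → BTree
  | nil => nil
  | node l _ => l

/-- The right subtree. -/
def right : BTree → BTree
  | nil => nil
  | node _ r => r

/-- Whether the tree is empty. -/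
def isNil : BTree → Bool
  | nil => true
  | node _ _ => false

/-- Whether the tree is a single node (a leaf). -/
def isLeafB : BTree → Bool
  | node nil nil => true
  | _ => false

/-- The number of right leaves (leaves that are right children). -/
def sleafB (B : BTree) : ℕ := B.subtrees.countP (fun t => isLeafB t.right)

/-- The number of left leaves whose parent has no right child. -/
def etleafB (B : BTree) : ℕ :=
  B.subtrees.countP (fun t => isLeafB t.left && t.right.isNil)

/-- The number of left leaves whose parent has a right child. -/
def entleafB (B : BTree) : ℕ :=
  B.subtrees.countP (fun t => isLeafB t.left && !t.right.isNil)

/-- The number of nodes having only a left child, whose left child has a left child. -/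
def yerleafB (B : BTree) : ℕ :=
  B.subtrees.countP (fun t => !t.left.isNil && t.right.isNil && !t.left.left.isNil)

/-- The number of nodes having only a left child, whose left child has no left child. -/
def syleafB (B : BTree) : ℕ :=
  B.subtrees.countP (fun t => !t.left.isNil && t.right.isNil && t.left.left.isNil)

end BTree

/-- The new refined Narayana polynomial `N_n`: by convention `N_1 = u₁`, and for other
`n` it is the generating polynomial of `(sleaf, etleaf, entleaf, yerleaf, syleaf)` over
binary trees with `n` nodes (`Bn n` is the finite set of such trees).
Here `u₁ = X 0`, `u₂ = X 1`, `u₃ = X 2`, `v₁ = X 3`, `v₂ = X 4`. -/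
noncomputable def Npoly (Bn : ℕ → Finset BTree) (n : ℕ) : MvPolynomial (Fin 5) ℤ :=
  if n = 1 then MvPolynomial.X 0
  else ∑ B ∈ Bn n,
    MvPolynomial.X 0 ^ BTree.sleafB B * MvPolynomial.X 1 ^ BTree.etleafB B *
      MvPolynomial.X 2 ^ BTree.entleafB B * MvPolynomial.X 3 ^ BTree.yerleafB B *
      MvPolynomial.X 4 ^ BTree.syleafB B

/-- The ordinary generating function `N(t) = Σ_{n ≥ 1} N_n tⁿ`. -/
noncomputable def Nser (Bn : ℕ → Finset BTree) : PowerSeries (MvPolynomial (Fin 5) ℤ) :=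
  PowerSeries.mk fun n => if n = 0 then 0 else Npoly Bn n


/-! Every statistic counts nodes by a condition on the shapes of their two subtrees, so the weight
of `node l r` is the weight of `l` times the weight of `r` times a root factor, and this root factor
splits as a sum of products of a function of `l` and a function of `r`. Decomposing at the root
therefore turns the weight series into `1 + t Φ + t Ψ N`, where `Φ` and `Ψ` differ from `N(t)` only
in low-order terms and through the trees with an empty left subtree, which are again counted by
`N(t)`. This gives a quadratic equation for `N(t)`, and completing the square yields the identity. -/

namespace BTree

lemma numNodes_nil : numNodes nil = 0 := rfl

lemma numNodes_node (l r : BTree) : (node l r).numNodes = l.numNodes + r.numNodes + 1 := by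
  simp [numNodes, subtrees]

lemma numNodes_eq_zero {B : BTree} : B.numNodes = 0 ↔ B = nil := by
  cases B <;> simp [numNodes_nil, numNodes_node]

lemma numNodes_eq_one {B : BTree} : B.numNodes = 1 ↔ B = node nil nil := by
  rcases B with _ | ⟨l, r⟩
  · simp [numNodes_nil]
  · simp [numNodes_node, ← numNodes_eq_zero]

lemma eq_of_two_le_numNodes {B : BTree} (hB : 2 ≤ B.numNodes) :
    (∃ a b c, B = node (node a b) c) ∨ ∃ c d, B = node nil (node c d) := by
  rcases B with _ | ⟨_ | ⟨a, b⟩, _ | ⟨c, d⟩⟩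
  · simp [numNodes_nil] at hB
  · simp [numNodes_node, numNodes_nil] at hB
  · exact .inr ⟨c, d, rfl⟩
  · exact .inl ⟨a, b, nil, rfl⟩
  · exact .inl ⟨a, b, _, rfl⟩

lemma countP_subtrees_node (p : BTree → Bool) (l r : BTree) :
    (node l r).subtrees.countP p
      = (if p (node l r) then 1 else 0) + l.subtrees.countP p + r.subtrees.countP p := by
  simp only [subtrees, List.countP_cons, List.countP_append]
  omega

def nilIndicator {R : Type*} [Zero R] [One R] : BTree → R
  | nil => 1
  | node _ _ => 0

section GeneratingSeries

open PowerSeries Finset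

variable {R : Type*} {Bn : ℕ → Finset BTree}

noncomputable def genSeries [Semiring R] (Bn : ℕ → Finset BTree) (f : BTree → R) :
    PowerSeries R :=
  PowerSeries.mk fun n => ∑ B ∈ Bn n, f B

lemma genSeries_add [Semiring R] (f g : BTree → R) :
    genSeries Bn (fun B => f B + g B) = genSeries Bn f + genSeries Bn g := by
  ext n
  simp [genSeries, sum_add_distrib]

lemma genSeries_const_mul [Semiring R] (c : R) (f : BTree → R) :
    genSeries Bn (fun B => c * f B) = C c * genSeries Bn f := by
  ext n
  simp [genSeries, mul_sum]

variable (hBn : ∀ n B, B ∈ Bn n ↔ B.numNodes = n)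
include hBn

lemma Bn_zero : Bn 0 = {nil} := by
  ext B
  simp [hBn, numNodes_eq_zero]

lemma Bn_one : Bn 1 = {node nil nil} := by
  ext B
  simp [hBn, numNodes_eq_one]

lemma sum_Bn_succ [AddCommMonoid R] (f : BTree → R) (n : ℕ) :
    ∑ B ∈ Bn (n + 1), f B
      = ∑ p ∈ antidiagonal n, ∑ l ∈ Bn p.1, ∑ r ∈ Bn p.2, f (node l r) := by
  simp_rw [← sum_product', sum_sigma']
  symm
  refine sum_bij (fun q _ => node q.2.1 q.2.2) ?_ ?_ ?_ fun _ _ => rfl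
  · rintro ⟨p, l, r⟩ hq
    simp only [mem_sigma, HasAntidiagonal.mem_antidiagonal, mem_product, hBn] at hq ⊢
    rw [numNodes_node, hq.2.1, hq.2.2, hq.1]
  · rintro ⟨p, l, r⟩ hq ⟨p', l', r'⟩ hq' heq
    simp only [mem_sigma, mem_product, hBn] at hq hq'
    simp only [node.injEq] at heq
    obtain ⟨rfl, rfl⟩ := heq
    obtain rfl : p = p' := Prod.ext (hq.2.1.symm.trans hq'.2.1) (hq.2.2.symm.trans hq'.2.2)
    rfl
  · intro B hB
    rw [hBn] at hB
    rcases B with _ | ⟨l, r⟩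
    · simp [numNodes_nil] at hB
    · refine ⟨⟨(l.numNodes, r.numNodes), l, r⟩, ?_, rfl⟩
      simpa [HasAntidiagonal.mem_antidiagonal, hBn, numNodes_node] using hB

lemma genSeries_node [CommSemiring R] (F G : BTree → R) :
    genSeries Bn (fun B => F B.left * G B.right)
      = C (F nil * G nil) + X * genSeries Bn F * genSeries Bn G := by
  ext n
  rcases n with _ | n
  · simp [genSeries, Bn_zero hBn, left, right]
  · rw [mul_assoc, map_add, coeff_C, coeff_succ_X_mul, coeff_mul]
    simp only [genSeries, coeff_mk, sum_Bn_succ hBn, sum_mul_sum, left, right]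
    simp

lemma genSeries_eq_of_eq_of_two_le [CommRing R] {f g : BTree → R}
    (h : ∀ B, 2 ≤ B.numNodes → f B = g B) :
    genSeries Bn f = genSeries Bn g + C (f nil - g nil)
      + C (f (node nil nil) - g (node nil nil)) * X := by
  ext n
  rcases n with _ | _ | n
  · simp [genSeries, Bn_zero hBn]
  · simp [genSeries, Bn_one hBn]
  · simp only [genSeries, map_add, coeff_mk, coeff_C, coeff_succ_mul_X, Nat.add_one_ne_zero,
      if_false, add_zero]
    exact sum_congr rfl fun B hB => h B (by rw [(hBn _ B).1 hB]; omega)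

lemma genSeries_nilIndicator [Semiring R] : genSeries Bn (nilIndicator : BTree → R) = 1 := by
  refine PowerSeries.ext fun n => ?_
  rcases n with _ | n
  · simp [genSeries, Bn_zero hBn, nilIndicator]
  · rw [coeff_one, if_neg n.succ_ne_zero, genSeries, coeff_mk]
    refine sum_eq_zero fun B hB => ?_
    rcases B with _ | ⟨l, r⟩
    · simp [hBn, numNodes_nil] at hB
    · rfl

end GeneratingSeries

section Weights

local notation "𝓡" => MvPolynomial (Fin 5) ℤ
local notation "u₁" => (MvPolynomial.X 0 : 𝓡)
local notation "u₂" => (MvPolynomial.X 1 : 𝓡)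
local notation "u₃" => (MvPolynomial.X 2 : 𝓡)
local notation "v₁" => (MvPolynomial.X 3 : 𝓡)
local notation "v₂" => (MvPolynomial.X 4 : 𝓡)

noncomputable def weight (B : BTree) : 𝓡 :=
  u₁ ^ sleafB B * u₂ ^ etleafB B * u₃ ^ entleafB B * v₁ ^ yerleafB B * v₂ ^ syleafB B

/- The factor contributed by the root of `node l r` to `weight (node l r)` is `onlyLeftWeight l`
when `r = nil`, and `leftWeight l * rightWeight r` otherwise (see `weight_node`). -/

noncomputable def onlyLeftWeight : BTree → 𝓡
  | nil => 1
  | node nil nil => u₂ * v₂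
  | node nil (node _ _) => v₂
  | node (node _ _) _ => v₁

noncomputable def leftWeight : BTree → 𝓡
  | node nil nil => u₃
  | _ => 1

noncomputable def rightWeight : BTree → 𝓡
  | nil => 0
  | node nil nil => u₁
  | _ => 1

lemma weight_nil : weight nil = 1 := by
  simp [weight, sleafB, etleafB, entleafB, yerleafB, syleafB, subtrees]

lemma weight_node (l r : BTree) :
    weight (node l r) = onlyLeftWeight l * weight l * nilIndicator r
      + leftWeight l * weight l * (rightWeight r * weight r) := by
  have root : weight (node l r) = (onlyLeftWeight l * nilIndicator r
      + leftWeight l * rightWeight r) * weight l * weight r := by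
    simp only [weight, sleafB, etleafB, entleafB, yerleafB, syleafB, countP_subtrees_node, pow_add]
    rcases l with _ | ⟨_ | ⟨_, _⟩, _ | ⟨_, _⟩⟩ <;>
      rcases r with _ | ⟨_ | ⟨_, _⟩, _ | ⟨_, _⟩⟩ <;>
      simp [onlyLeftWeight, leftWeight, rightWeight, nilIndicator, isLeafB, isNil, left, right] <;>
      ring
  rw [root]
  cases r <;> simp [nilIndicator, rightWeight, weight_nil]
  ring

lemma weight_leaf : weight (node nil nil) = 1 := by
  simp [weight_node, weight_nil, onlyLeftWeight, nilIndicator, rightWeight]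

lemma onlyLeftWeight_of_two_le {B : BTree} (hB : 2 ≤ B.numNodes) :
    onlyLeftWeight B = v₁ + (v₂ - v₁) * nilIndicator B.left := by
  obtain ⟨a, b, c, rfl⟩ | ⟨c, d, rfl⟩ := eq_of_two_le_numNodes hB <;>
    simp [onlyLeftWeight, nilIndicator, left]

lemma leftWeight_of_two_le {B : BTree} (hB : 2 ≤ B.numNodes) : leftWeight B = 1 := by
  obtain ⟨a, b, c, rfl⟩ | ⟨c, d, rfl⟩ := eq_of_two_le_numNodes hB <;> rfl

lemma rightWeight_of_two_le {B : BTree} (hB : 2 ≤ B.numNodes) : rightWeight B = 1 := by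
  obtain ⟨a, b, c, rfl⟩ | ⟨c, d, rfl⟩ := eq_of_two_le_numNodes hB <;> rfl

open PowerSeries

variable {Bn : ℕ → Finset BTree} (hBn : ∀ n B, B ∈ Bn n ↔ B.numNodes = n)
include hBn

lemma genSeries_weight_eq :
    genSeries Bn weight = 1 + X * genSeries Bn (fun B => onlyLeftWeight B * weight B)
      + X * genSeries Bn (fun B => leftWeight B * weight B)
        * genSeries Bn (fun B => rightWeight B * weight B) := by
  have split : weight = fun B => onlyLeftWeight B.left * weight B.left * nilIndicator B.right
      + leftWeight B.left * weight B.left * (rightWeight B.right * weight B.right) := by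
    funext B
    cases B with
    | nil => simp [weight_nil, onlyLeftWeight, nilIndicator, rightWeight, left, right]
    | node l r => exact weight_node l r
  conv_lhs => rw [split]
  rw [genSeries_add, genSeries_node hBn (fun l => onlyLeftWeight l * weight l) nilIndicator,
    genSeries_node hBn (fun l => leftWeight l * weight l) (fun r => rightWeight r * weight r),
    genSeries_nilIndicator hBn]
  simp [onlyLeftWeight, weight_nil, nilIndicator, rightWeight]

lemma genSeries_rightWeight_mul_weight :
    genSeries Bn (fun B => rightWeight B * weight B) = Nser Bn := by
  refine PowerSeries.ext fun n => ?_
  rcases n with _ | _ | n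
  · simp [genSeries, Nser, Bn_zero hBn, rightWeight]
  · simp [genSeries, Nser, Npoly, Bn_one hBn, rightWeight, weight_leaf]
  · simp only [genSeries, Nser, Npoly, coeff_mk, Nat.add_one_ne_zero, if_false]
    exact Finset.sum_congr rfl fun B hB => by
      rw [rightWeight_of_two_le (by rw [(hBn _ B).1 hB]; omega), one_mul, weight]

lemma genSeries_weight : genSeries Bn weight = Nser Bn + 1 + C (1 - u₁) * X := by
  rw [← genSeries_rightWeight_mul_weight hBn,
    genSeries_eq_of_eq_of_two_le hBn (g := fun B => rightWeight B * weight B) fun B hB => by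
      rw [rightWeight_of_two_le hB, one_mul]]
  simp [rightWeight, weight_nil, weight_leaf]

lemma genSeries_leftWeight_mul_weight :
    genSeries Bn (fun B => leftWeight B * weight B) = genSeries Bn weight + C (u₃ - 1) * X := by
  rw [genSeries_eq_of_eq_of_two_le hBn (g := weight) fun B hB => by
    rw [leftWeight_of_two_le hB, one_mul]]
  simp [leftWeight, weight_nil, weight_leaf]

lemma genSeries_nilIndicator_left_mul_weight :
    genSeries Bn (fun B => nilIndicator B.left * weight B) = 1 + X * (1 + Nser Bn) := by
  have split : (fun B => nilIndicator B.left * weight B)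
      = fun B => nilIndicator B.left
          * (nilIndicator B.right + rightWeight B.right * weight B.right) := by
    funext B
    rcases B with _ | ⟨_ | ⟨a, b⟩, r⟩
    · simp [nilIndicator, rightWeight, weight_nil, left, right]
    · simp [nilIndicator, weight_node, onlyLeftWeight, leftWeight, weight_nil, left, right]
    · simp [nilIndicator, left]
  rw [split, genSeries_node hBn nilIndicator fun r => nilIndicator r + rightWeight r * weight r,
    genSeries_add, genSeries_nilIndicator hBn, genSeries_rightWeight_mul_weight hBn]
  simp [nilIndicator, rightWeight]

lemma genSeries_onlyLeftWeight_mul_weight :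
    genSeries Bn (fun B => onlyLeftWeight B * weight B)
      = C v₁ * genSeries Bn weight
        + C (v₂ - v₁) * genSeries Bn (fun B => nilIndicator B.left * weight B)
        + C (1 - v₂) + C (u₂ * v₂ - v₂) * X := by
  rw [genSeries_eq_of_eq_of_two_le hBn
    (g := fun B => v₁ * weight B + (v₂ - v₁) * (nilIndicator B.left * weight B))
    fun B hB => by rw [onlyLeftWeight_of_two_le hB]; ring,
    genSeries_add, genSeries_const_mul, genSeries_const_mul]
  simp [onlyLeftWeight, nilIndicator, weight_nil, weight_leaf, left]

lemma Nser_functional_equation :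
    Nser Bn = X * (C u₁ + C (u₂ * v₂) * X + C v₁ * (Nser Bn - C u₁ * X)
        + C (v₂ - v₁) * X * Nser Bn)
      + X * Nser Bn * (1 + Nser Bn + C (u₃ - u₁) * X) := by
  have h := genSeries_weight_eq hBn
  rw [genSeries_onlyLeftWeight_mul_weight hBn, genSeries_leftWeight_mul_weight hBn,
    genSeries_nilIndicator_left_mul_weight hBn, genSeries_rightWeight_mul_weight hBn,
    genSeries_weight hBn] at h
  simp only [map_sub, map_mul, map_one] at h ⊢
  linear_combination h

end Weights

end BTree

/-- **Theorem (algebraic equation for `N(t)`).**  With `a = u₁ - u₃ + v₁ - v₂`,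
`b = u₁ + u₃ - v₁ + v₂` and `c = v₁ + 1`, the series `N(t)` satisfies
`(a t² - c t + 1 - 2t N(t))² = a² t⁴ + 2(bc - 2u₁ - 2u₂v₂) t³ + (c² - 2b) t² - 2c t + 1`. -/
theorem Nser_quadratic_equation
    (Bn : ℕ → Finset BTree) (hBn : ∀ n B, B ∈ Bn n ↔ BTree.numNodes B = n) :
    (PowerSeries.C (R := MvPolynomial (Fin 5) ℤ)
          (MvPolynomial.X 0 - MvPolynomial.X 2 + MvPolynomial.X 3 - MvPolynomial.X 4) *
            PowerSeries.X ^ 2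
        - PowerSeries.C (R := MvPolynomial (Fin 5) ℤ) (MvPolynomial.X 3 + 1) * PowerSeries.X
        + 1 - 2 * PowerSeries.X * Nser Bn) ^ 2
      = PowerSeries.C (R := MvPolynomial (Fin 5) ℤ)
            ((MvPolynomial.X 0 - MvPolynomial.X 2 + MvPolynomial.X 3 - MvPolynomial.X 4) ^ 2) *
          PowerSeries.X ^ 4
        + PowerSeries.C (R := MvPolynomial (Fin 5) ℤ)
            (2 * ((MvPolynomial.X 0 + MvPolynomial.X 2 - MvPolynomial.X 3 + MvPolynomial.X 4) *
                (MvPolynomial.X 3 + 1)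
              - 2 * MvPolynomial.X 0 - 2 * MvPolynomial.X 1 * MvPolynomial.X 4)) *
          PowerSeries.X ^ 3
        + PowerSeries.C (R := MvPolynomial (Fin 5) ℤ)
            ((MvPolynomial.X 3 + 1) ^ 2
              - 2 * (MvPolynomial.X 0 + MvPolynomial.X 2 - MvPolynomial.X 3 + MvPolynomial.X 4)) *
          PowerSeries.X ^ 2
        - PowerSeries.C (R := MvPolynomial (Fin 5) ℤ) (2 * (MvPolynomial.X 3 + 1)) * PowerSeries.X
        + 1 := by
  have h := BTree.Nser_functional_equation hBn
  simp only [map_sub, map_add, map_mul, map_one, map_pow, map_ofNat] at h ⊢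
  linear_combination (-4 * PowerSeries.X) * h
end

section
/- Let B be a binary tree. A node of B is a head if it is the root or if it is a right child. Let θ(B) be the binary tree obtained from B by exchanging the left and right subtrees at every head of B (these exchanges at distinct nodes commute, and the node set of θ(B) is naturally identified with that of B). Then for every node v of B: v is a head of B if and only if the path from the root to v in θ(B) contains an even number of right edges (i.e., v is at odd right-level in θ(B), where the right-level of a node is one plus the number of right edges on the path from the root to it). -/
namespace BTree

/-- The switching map `θ`: the Boolean flag records whether the current node is a head
of the original tree (the root, or a right child).  At every head the left and right
subtrees are exchanged. -/
def theta : Bool → BTree → BTree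
  | _, nil => nil
  | true, node l r => node (theta true r) (theta false l)
  | false, node l r => node (theta false l) (theta true r)

/-- A position in a binary tree: a list of directions from the root
(`false` = left, `true` = right).  `IsNodeAt B p` says that `p` is the position of an
actual node of `B`. -/
def IsNodeAt : BTree → List Bool → Prop
  | nil, _ => False
  | node _ _, [] => True
  | node l r, d :: p => if d then IsNodeAt r p else IsNodeAt l p

/-- The natural identification of the nodes of `B` with the nodes of `θ(B)`:
`posMap h B p` is the position in `θ(B)` of the node of `B` at position `p`
(`h` records whether the root of `B` is a head of the original tree). -/
def posMap : Bool → BTree → List Bool → List Bool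
  | _, _, [] => []
  | _, nil, _ :: _ => []
  | true, node l r, d :: p =>
      if d then false :: posMap true r p else true :: posMap false l p
  | false, node l r, d :: p =>
      if d then true :: posMap true r p else false :: posMap false l p

/-- The node of `B` at position `p` is a head: it is the root or a right child. -/
def IsHeadAt (p : List Bool) : Prop := p = [] ∨ p.getLast? = some true

end BTree

/-! Walking from a node with head flag `h` in direction `d` crosses a right edge of `θ(B)`
exactly when `d ≠ h`, and the child reached has head flag `d`. Hence the parity of the right
edges on the image of a path flips whenever the direction changes, and the image path of `p`
has an even number of right edges iff `p` is empty or its last direction equals the flag `h`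
of the root. -/

namespace BTree

theorem isNodeAt_node_cons {l r : BTree} {d : Bool} {p : List Bool} :
    IsNodeAt (node l r) (d :: p) ↔ IsNodeAt (if d then r else l) p := by
  cases d <;> rfl

theorem posMap_node_cons (h d : Bool) (l r : BTree) (p : List Bool) :
    posMap h (node l r) (d :: p) = (h ^^ d) :: posMap d (if d then r else l) p := by
  cases h <;> cases d <;> rfl

theorem isNodeAt_theta_node_cons {h d : Bool} {l r : BTree} {q : List Bool} :
    IsNodeAt (theta h (node l r)) ((h ^^ d) :: q) ↔
      IsNodeAt (theta d (if d then r else l)) q := by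
  cases h <;> cases d <;> rfl

theorem isNodeAt_theta_posMap {B : BTree} {p : List Bool} (hp : IsNodeAt B p) (h : Bool) :
    IsNodeAt (theta h B) (posMap h B p) := by
  induction p generalizing B h with
  | nil =>
    cases B with
    | nil => exact hp.elim
    | node l r => cases h <;> trivial
  | cons d p ih =>
    cases B with
    | nil => exact hp.elim
    | node l r =>
      rw [posMap_node_cons, isNodeAt_theta_node_cons]
      exact ih (isNodeAt_node_cons.mp hp) d

theorem even_count_posMap_iff {B : BTree} {p : List Bool} (hp : IsNodeAt B p) (h : Bool) :
    Even ((posMap h B p).count true) ↔ p.getLastD h = h := by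
  induction p generalizing B h with
  | nil => simp [posMap]
  | cons d p ih =>
    cases B with
    | nil => exact hp.elim
    | node l r =>
      rw [posMap_node_cons, List.count_cons, Nat.even_add, ih (isNodeAt_node_cons.mp hp) d,
        List.getLastD_cons]
      generalize p.getLastD d = last
      cases h <;> cases d <;> cases last <;> simp

theorem isHeadAt_iff_getLastD {p : List Bool} : IsHeadAt p ↔ p.getLastD true = true := by
  rcases p.eq_nil_or_concat with rfl | ⟨L, b, rfl⟩ <;> simp [IsHeadAt]

end BTree

/-- **Theorem (heads become nodes at odd right-level under `θ`).**  For every node `v`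
of a binary tree `B` (given by its position `p`), the corresponding node of `θ(B)` is at
position `posMap true B p`; and `v` is a head of `B` (the root or a right child) if and
only if the path from the root of `θ(B)` to the corresponding node contains an even
number of right edges, i.e. the node is at odd right-level in `θ(B)`. -/
theorem head_iff_odd_rightLevel_theta
    (B : BTree) (p : List Bool) (hp : BTree.IsNodeAt B p) :
    BTree.IsNodeAt (BTree.theta true B) (BTree.posMap true B p) ∧
      (BTree.IsHeadAt p ↔ Even ((BTree.posMap true B p).count true)) :=
  ⟨BTree.isNodeAt_theta_posMap hp true,
    BTree.isHeadAt_iff_getLastD.trans (BTree.even_count_posMap_iff hp true).symm⟩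
end
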